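/- Under the time-varying stochastic approximation setting described in the context, assume in addition that ‖θ̂_k − θ*_k‖ is square-integrable for every k, that there is ū with u_k ≤ ū < 1 for all k, and that there are constants 0 < x̲ ≤ X < ∞ with x̲ ≤ (M_k√(v_k) + B_k)/(1 − √(u_k)) ≤ X for all k. Then limsup_{k→∞} √(E‖θ̂_k − θ*_k‖²) ≤ limsup_{k→∞} (M_k√(v_k) + B_k)/(1 − √(u_k)). -/

import Mathlib

/-!
Strong convexity together with co-coercivity of an `L`-Lipschitz gradient (Baillon–Haddad)
makes one gradient step contract the distance to the minimiser by the factor `√u_k`, while the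
noise enters with weight `a_k ≤ √v_k`. Adding the drift of the minimiser and passing to
root-mean-square norms (Minkowski) gives, with `D_k = √(E‖θ̂_k − θ*_k‖²)` and
`r_k = (M_k√v_k + B_k)/(1 − √u_k)`,
`D_{k+1} ≤ √u_k D_k + (1 − √u_k) r_k`.
As `√u_k ≤ √ū < 1`, the excess of `D_k` over any level eventually above `r_k` decays
geometrically, so `limsup D_k ≤ limsup r_k`.
-/

open MeasureTheory Filter Topology RealInnerProductSpace

lemma le_of_hasDerivAt_of_nonneg_on_Ioo {ψ ψ' : ℝ → ℝ} (hψ : ∀ t, HasDerivAt ψ (ψ' t) t)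
    (hψ' : ∀ t ∈ Set.Ioo (0 : ℝ) 1, 0 ≤ ψ' t) : ψ 0 ≤ ψ 1 := by
  have hmono : MonotoneOn ψ (Set.Icc 0 1) :=
    monotoneOn_of_hasDerivWithinAt_nonneg (convex_Icc 0 1)
      (fun t _ => (hψ t).continuousAt.continuousWithinAt) (fun t _ => (hψ t).hasDerivWithinAt)
      (by simpa only [interior_Icc] using hψ')
  exact hmono (by simp) (by simp) zero_le_one

section Gradient

variable {E : Type*} [NormedAddCommGroup E] [InnerProductSpace ℝ E] {g : E → E} {L : ℝ}

lemma le_of_strongly_monotone_of_lipschitz [Nontrivial E] {C : ℝ}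
    (hstrong : ∀ z w, C * ‖z - w‖ ^ 2 ≤ ⟪z - w, g z - g w⟫)
    (hlip : ∀ z w, ‖g z - g w‖ ≤ L * ‖z - w‖) : C ≤ L := by
  obtain ⟨x, hx⟩ := exists_ne (0 : E)
  have hCx := hstrong x 0
  have hCS := real_inner_le_norm (x - 0) (g x - g 0)
  have hLx := mul_le_mul_of_nonneg_left (hlip x 0) (norm_nonneg (x - 0))
  rw [sub_zero] at hCx hCS hLx
  have hpos : 0 < ‖x‖ ^ 2 := by positivity
  nlinarith

variable [CompleteSpace E] {f : E → ℝ}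

lemma hasDerivAt_comp_add_smul (hg : ∀ z, HasGradientAt f (g z) z) (x v : E) (t : ℝ) :
    HasDerivAt (fun t : ℝ => f (x + t • v)) ⟪g (x + t • v), v⟫ t := by
  have hline : HasDerivAt (fun t : ℝ => x + t • v) v t := by
    simpa using ((hasDerivAt_id t).smul_const v).const_add x
  simpa [InnerProductSpace.toDual_apply_apply, Function.comp_def] using
    (hg (x + t • v)).hasFDerivAt.comp_hasDerivAt t hline

lemma add_inner_le_of_monotone_gradient (hg : ∀ z, HasGradientAt f (g z) z)
    (hmono : ∀ z w, 0 ≤ ⟪z - w, g z - g w⟫) (x y : E) :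
    f x + ⟪g x, y - x⟫ ≤ f y := by
  have key := le_of_hasDerivAt_of_nonneg_on_Ioo
    (ψ := fun t => f (x + t • (y - x)) - t * ⟪g x, y - x⟫)
    (fun t => (hasDerivAt_comp_add_smul hg x (y - x) t).sub (hasDerivAt_mul_const ⟪g x, y - x⟫))
    (fun t ht => by
      have h := hmono (x + t • (y - x)) x
      rw [add_sub_cancel_left, real_inner_smul_left, real_inner_comm, inner_sub_left] at h
      exact sub_nonneg.2 (le_of_mul_le_mul_left (by linarith) ht.1))
  simp only [zero_smul, add_zero, one_smul, add_sub_cancel, zero_mul, one_mul, sub_zero] at key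
  linarith

lemma le_add_inner_add_of_lipschitz_gradient (hg : ∀ z, HasGradientAt f (g z) z)
    (hlip : ∀ z w, ‖g z - g w‖ ≤ L * ‖z - w‖) (x y : E) :
    f y ≤ f x + ⟪g x, y - x⟫ + L / 2 * ‖y - x‖ ^ 2 := by
  set v := y - x
  have key := le_of_hasDerivAt_of_nonneg_on_Ioo (ψ := fun t =>
      t * ⟪g x, v⟫ + L / 2 * ‖v‖ ^ 2 * t ^ 2 - f (x + t • v))
    (fun t => (((hasDerivAt_mul_const ⟪g x, v⟫).add
      ((hasDerivAt_pow 2 t).const_mul (L / 2 * ‖v‖ ^ 2))).sub (hasDerivAt_comp_add_smul hg x v t)))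
    (fun t ht => by
      have h1 : ⟪g (x + t • v) - g x, v⟫ ≤ ‖g (x + t • v) - g x‖ * ‖v‖ := real_inner_le_norm _ _
      have h2 : ‖g (x + t • v) - g x‖ ≤ L * (t * ‖v‖) := by
        simpa [norm_smul, abs_of_pos ht.1] using hlip (x + t • v) x
      rw [inner_sub_left] at h1
      push_cast
      nlinarith [mul_le_mul_of_nonneg_right h2 (norm_nonneg v)])
  simp only [zero_smul, add_zero, one_smul, zero_mul, one_mul, ne_eq, OfNat.ofNat_ne_zero,
    not_false_eq_true, zero_pow, mul_zero, one_pow, mul_one, show x + v = y from add_sub_cancel x y]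
    at key
  linarith

lemma add_sq_norm_div_le_of_gradient_eq_zero (hg : ∀ z, HasGradientAt f (g z) z)
    (hmono : ∀ z w, 0 ≤ ⟪z - w, g z - g w⟫) (hlip : ∀ z w, ‖g z - g w‖ ≤ L * ‖z - w‖)
    (hL : 0 < L) {x : E} (hx : g x = 0) (y : E) :
    f x + ‖g y‖ ^ 2 / (2 * L) ≤ f y := by
  -- `x` minimises `f`; compare it with the gradient step `y - L⁻¹ • g y`
  set z := y - L⁻¹ • g y
  have hmin : f x ≤ f z := by
    simpa [hx] using add_inner_le_of_monotone_gradient hg hmono x z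
  have hdesc := le_add_inner_add_of_lipschitz_gradient hg hlip y z
  have hzy : z - y = -(L⁻¹ • g y) := sub_sub_cancel_left _ _
  rw [hzy, inner_neg_right, real_inner_smul_right, real_inner_self_eq_norm_sq, norm_neg,
    norm_smul, Real.norm_eq_abs, abs_of_pos (inv_pos.2 hL)] at hdesc
  have : L / 2 * (L⁻¹ * ‖g y‖) ^ 2 - L⁻¹ * ‖g y‖ ^ 2 = -(‖g y‖ ^ 2 / (2 * L)) := by
    field_simp; ring
  linarith

lemma add_inner_add_sq_norm_div_le (hg : ∀ z, HasGradientAt f (g z) z)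
    (hmono : ∀ z w, 0 ≤ ⟪z - w, g z - g w⟫) (hlip : ∀ z w, ‖g z - g w‖ ≤ L * ‖z - w‖)
    (hL : 0 < L) (x y : E) :
    f x + ⟪g x, y - x⟫ + ‖g y - g x‖ ^ 2 / (2 * L) ≤ f y := by
  -- tilt `f` by the linear function `⟪g x, ·⟫` so that `x` becomes a critical point
  have hg' : ∀ z, HasGradientAt (fun w => f w - ⟪g x, w⟫) (g z - g x) z := fun z => by
    rw [hasGradientAt_iff_hasFDerivAt, map_sub]
    exact (hg z).hasFDerivAt.sub (InnerProductSpace.toDual ℝ E (g x)).hasFDerivAt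
  have key := add_sq_norm_div_le_of_gradient_eq_zero hg'
    (fun z w => by simpa only [sub_sub_sub_cancel_right] using hmono z w)
    (fun z w => by simpa only [sub_sub_sub_cancel_right] using hlip z w) hL (sub_self (g x)) y
  rw [inner_sub_right]
  linarith

lemma sq_norm_sub_le_mul_inner_of_monotone_of_lipschitz (hg : ∀ z, HasGradientAt f (g z) z)
    (hmono : ∀ z w, 0 ≤ ⟪z - w, g z - g w⟫) (hlip : ∀ z w, ‖g z - g w‖ ≤ L * ‖z - w‖)
    (hL : 0 < L) (x y : E) :
    ‖g x - g y‖ ^ 2 ≤ L * ⟪x - y, g x - g y⟫ := by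
  have hxy := add_inner_add_sq_norm_div_le hg hmono hlip hL x y
  have hyx := add_inner_add_sq_norm_div_le hg hmono hlip hL y x
  have hinner : ⟪g x, y - x⟫ + ⟪g y, x - y⟫ = -⟪x - y, g x - g y⟫ := by
    simp only [inner_sub_left, inner_sub_right, real_inner_comm]
    ring
  rw [norm_sub_rev] at hxy
  have : ‖g x - g y‖ ^ 2 / L ≤ ⟪x - y, g x - g y⟫ := by
    have : ‖g x - g y‖ ^ 2 / (2 * L) + ‖g x - g y‖ ^ 2 / (2 * L) = ‖g x - g y‖ ^ 2 / L := by
      field_simp; ring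
    linarith
  rwa [div_le_iff₀' hL] at this

end Gradient

-- `contractionFactor` and `noiseGain` are the `u_k` and `v_k` of the setting.
noncomputable def contractionFactor (a q C L : ℝ) : ℝ :=
  L / C + a * C * ((q + 1) * (a * L - 1) - 1)

noncomputable def noiseGain (a q C L : ℝ) : ℝ := a * (a * L * (q + 1) - 1) / (q * C)

section Step

variable {E : Type*} [NormedAddCommGroup E] [InnerProductSpace ℝ E] {a q C L : ℝ}

lemma sq_le_noiseGain (ha : 0 < a) (hq : 0 < q) (hC : 0 < C) (hCL : C ≤ L) (haL : 1 ≤ a * L) :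
    a ^ 2 ≤ noiseGain a q C L := by
  rw [noiseGain, le_div_iff₀ (by positivity)]
  nlinarith [mul_nonneg (mul_nonneg (mul_nonneg ha.le ha.le) hq.le) (sub_nonneg.2 hCL),
    mul_nonneg ha.le (sub_nonneg.2 haL)]

lemma norm_sub_smul_sq_le (ha : 0 < a) (hq : 0 ≤ q) (hC : 0 < C) (hCL : C ≤ L)
    (haL : 1 ≤ a * L) (haL₂ : a * L ≤ 2) {x G : E} (hS : C * ‖x‖ ^ 2 ≤ ⟪x, G⟫)
    (hco : ‖G‖ ^ 2 ≤ L * ⟪x, G⟫) :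
    ‖x - a • G‖ ^ 2 ≤ contractionFactor a q C L * ‖x‖ ^ 2 := by
  have hexpand : ‖x - a • G‖ ^ 2 = ‖x‖ ^ 2 - 2 * (a * ⟪x, G⟫) + a ^ 2 * ‖G‖ ^ 2 := by
    rw [norm_sub_sq_real, real_inner_smul_right, norm_smul, Real.norm_eq_abs, abs_of_pos ha,
      mul_pow]
  have hgap : contractionFactor a q C L - (1 + a * C * (a * L - 2))
      = (L - C) / C + a * C * q * (a * L - 1) := by
    rw [contractionFactor]; field_simp; ring
  have hgap_nonneg : 0 ≤ (L - C) / C + a * C * q * (a * L - 1) := by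
    have := div_nonneg (sub_nonneg.2 hCL) hC.le
    have := mul_nonneg (mul_nonneg (mul_nonneg ha.le hC.le) hq) (sub_nonneg.2 haL)
    linarith
  calc ‖x - a • G‖ ^ 2 ≤ ‖x‖ ^ 2 + a * (a * L - 2) * ⟪x, G⟫ := by
        nlinarith [mul_le_mul_of_nonneg_left hco (sq_nonneg a)]
    _ ≤ ‖x‖ ^ 2 + a * (a * L - 2) * (C * ‖x‖ ^ 2) := by
        have : a * (a * L - 2) ≤ 0 := mul_nonpos_of_nonneg_of_nonpos ha.le (by linarith)
        nlinarith
    _ = (1 + a * C * (a * L - 2)) * ‖x‖ ^ 2 := by ring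
    _ ≤ contractionFactor a q C L * ‖x‖ ^ 2 := by gcongr; linarith

lemma norm_sub_smul_add_le (ha : 0 < a) (hq : 0 < q) (hC : 0 < C) (hCL : C ≤ L)
    (haL : 1 ≤ a * L) (haL₂ : a * L ≤ 2) {x G : E} (e : E) (hS : C * ‖x‖ ^ 2 ≤ ⟪x, G⟫)
    (hco : ‖G‖ ^ 2 ≤ L * ⟪x, G⟫) :
    ‖x - a • (G + e)‖ ≤ √(contractionFactor a q C L) * ‖x‖ + √(noiseGain a q C L) * ‖e‖ := by
  have hG : ‖x - a • G‖ ≤ √(contractionFactor a q C L) * ‖x‖ := by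
    simpa only [Real.sqrt_mul' _ (sq_nonneg _), Real.sqrt_sq (norm_nonneg _)] using
      Real.sqrt_le_sqrt (norm_sub_smul_sq_le ha hq.le hC hCL haL haL₂ hS hco)
  have ha_le : a ≤ √(noiseGain a q C L) :=
    Real.le_sqrt_of_sq_le (sq_le_noiseGain ha hq hC hCL haL)
  calc ‖x - a • (G + e)‖ = ‖(x - a • G) - a • e‖ := by rw [smul_add, sub_add_eq_sub_sub]
    _ ≤ ‖x - a • G‖ + a * ‖e‖ := by
        simpa only [norm_smul, Real.norm_eq_abs, abs_of_pos ha] using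
          norm_sub_le (x - a • G) (a • e)
    _ ≤ _ := by gcongr

lemma norm_sub_le_of_gradient_step [CompleteSpace E] [Nontrivial E] {f : E → ℝ} {g : E → E}
    (hg : ∀ z, HasGradientAt f (g z) z) (hstrong : ∀ z w, C * ‖z - w‖ ^ 2 ≤ ⟪z - w, g z - g w⟫)
    (hlip : ∀ z w, ‖g z - g w‖ ≤ L * ‖z - w‖) (ha : 0 < a) (hq : 0 < q) (hC : 0 < C)
    (haL : 1 ≤ a * L) (haLq : (q + 1) * (a * L - 1) ≤ 1) {θ θ' θs θs' e : E} (hθs : g θs = 0)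
    (hθ' : θ' = θ - a • (g θ + e)) :
    ‖θ' - θs'‖ ≤
      √(contractionFactor a q C L) * ‖θ - θs‖ + √(noiseGain a q C L) * ‖e‖ + ‖θs' - θs‖ := by
  have hCL : C ≤ L := le_of_strongly_monotone_of_lipschitz hstrong hlip
  have haL₂ : a * L ≤ 2 := by nlinarith
  have hmono : ∀ z w, 0 ≤ ⟪z - w, g z - g w⟫ := fun z w =>
    (mul_nonneg hC.le (sq_nonneg _)).trans (hstrong z w)
  have hS := hstrong θ θs
  have hco := sq_norm_sub_le_mul_inner_of_monotone_of_lipschitz hg hmono hlip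
    (hC.trans_le hCL) θ θs
  rw [hθs, sub_zero] at hS hco
  calc ‖θ' - θs'‖ = ‖(θ - θs - a • (g θ + e)) - (θs' - θs)‖ := by rw [hθ']; congr 1; abel
    _ ≤ ‖θ - θs - a • (g θ + e)‖ + ‖θs' - θs‖ := norm_sub_le _ _
    _ ≤ _ := by gcongr; exact norm_sub_smul_add_le ha hq hC hCL haL haL₂ e hS hco

end Step

section RootMeanSquare

variable {Ω E : Type*} [MeasurableSpace Ω] {P : Measure Ω} [NormedAddCommGroup E]

lemma MeasureTheory.MemLp.eLpNorm_two_eq_ofReal_sqrt {X : Ω → E} (hX : MemLp X 2 P) :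
    eLpNorm X 2 P = ENNReal.ofReal √(∫ ω, ‖X ω‖ ^ 2 ∂P) := by
  rw [hX.eLpNorm_eq_integral_rpow_norm two_ne_zero ENNReal.ofNat_ne_top, Real.sqrt_eq_rpow]
  norm_num

lemma sqrt_integral_sq_norm_le {W X Y Z : Ω → E} {c₁ c₂ : ℝ} (hc₁ : 0 ≤ c₁) (hc₂ : 0 ≤ c₂)
    (hW : AEStronglyMeasurable W P) (hX : MemLp X 2 P) (hY : MemLp Y 2 P) (hZ : MemLp Z 2 P)
    (hle : ∀ᵐ ω ∂P, ‖W ω‖ ≤ c₁ * ‖X ω‖ + c₂ * ‖Y ω‖ + ‖Z ω‖) :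
    √(∫ ω, ‖W ω‖ ^ 2 ∂P) ≤
      c₁ * √(∫ ω, ‖X ω‖ ^ 2 ∂P) + c₂ * √(∫ ω, ‖Y ω‖ ^ 2 ∂P) + √(∫ ω, ‖Z ω‖ ^ 2 ∂P) := by
  have hX' : MemLp (fun ω => c₁ * ‖X ω‖) 2 P := hX.norm.const_mul c₁
  have hY' : MemLp (fun ω => c₂ * ‖Y ω‖) 2 P := hY.norm.const_mul c₂
  have hbound : ∀ᵐ ω ∂P, ‖W ω‖ ≤ ‖c₁ * ‖X ω‖ + c₂ * ‖Y ω‖ + ‖Z ω‖‖ := by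
    filter_upwards [hle] with ω hω
    exact hω.trans (Real.le_norm_self _)
  have hW' : MemLp W 2 P := ((hX'.add hY').add hZ.norm).of_le hW hbound
  have hmink : eLpNorm W 2 P ≤ eLpNorm (fun ω => c₁ * ‖X ω‖) 2 P
      + eLpNorm (fun ω => c₂ * ‖Y ω‖) 2 P + eLpNorm (fun ω => ‖Z ω‖) 2 P :=
    (eLpNorm_mono_ae hbound).trans <|
      (eLpNorm_add_le (hX'.1.add hY'.1) hZ.norm.1 one_le_two).trans
        (add_le_add_left (eLpNorm_add_le hX'.1 hY'.1 one_le_two) _)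
  have hscale : ∀ (c : ℝ) (V : Ω → E), 0 ≤ c →
      eLpNorm (fun ω => c * ‖V ω‖) 2 P = ENNReal.ofReal c * eLpNorm V 2 P := fun c V hc => by
    rw [← Real.enorm_eq_ofReal hc, ← eLpNorm_norm V, ← eLpNorm_const_smul]; rfl
  rw [hscale c₁ X hc₁, hscale c₂ Y hc₂, eLpNorm_norm, hW'.eLpNorm_two_eq_ofReal_sqrt,
    hX.eLpNorm_two_eq_ofReal_sqrt, hY.eLpNorm_two_eq_ofReal_sqrt, hZ.eLpNorm_two_eq_ofReal_sqrt,
    ← ENNReal.ofReal_mul hc₁, ← ENNReal.ofReal_mul hc₂, ← ENNReal.ofReal_add (by positivity)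
    (by positivity), ← ENNReal.ofReal_add (by positivity) (by positivity)] at hmink
  exact (ENNReal.ofReal_le_ofReal_iff (by positivity)).1 hmink

end RootMeanSquare

lemma tendsto_zero_of_eventually_le_mul {E : ℕ → ℝ} {s : ℝ} (hE : ∀ k, 0 ≤ E k) (hs₀ : 0 ≤ s)
    (hs₁ : s < 1) (hrec : ∀ᶠ k in atTop, E (k + 1) ≤ s * E k) : Tendsto E atTop (𝓝 0) := by
  obtain ⟨N, hN⟩ := eventually_atTop.1 hrec
  have hgeom : ∀ k, E (k + N) ≤ s ^ k * E (0 + N) := fun k =>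
    le_geom (u := fun j => E (j + N)) hs₀ k fun j _ => by
      simpa only [add_right_comm j 1 N] using hN (j + N) (Nat.le_add_left N j)
  rw [← tendsto_add_atTop_iff_nat N]
  refine squeeze_zero (fun k => hE _) hgeom ?_
  simpa using (tendsto_pow_atTop_nhds_zero_of_lt_one hs₀ hs₁).mul_const (E (0 + N))

lemma limsup_le_limsup_of_le_convex_comb {D r σ : ℕ → ℝ} {s : ℝ} (hσ₀ : ∀ k, 0 ≤ σ k)
    (hσs : ∀ k, σ k ≤ s) (hs : s < 1) (hD : ∀ k, 0 ≤ D k) (hr : BddAbove (Set.range r))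
    (hrec : ∀ k, D (k + 1) ≤ σ k * D k + (1 - σ k) * r k) :
    limsup D atTop ≤ limsup r atTop := by
  refine le_of_forall_pos_le_add fun ε hε => ?_
  set m := limsup r atTop + ε / 2 with hm
  have hrm : ∀ᶠ k in atTop, r k < m :=
    eventually_lt_of_limsup_lt (by linarith [hm]) hr.isBoundedUnder_of_range
  -- the excess of `D` over `m` contracts by the factor `s` once `r < m`
  have hexcess : Tendsto (fun k => max (D k - m) 0) atTop (𝓝 0) := by
    refine tendsto_zero_of_eventually_le_mul (fun k => le_max_right _ _) ((hσ₀ 0).trans (hσs 0))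
      hs ?_
    filter_upwards [hrm] with k hk
    have h1 : D (k + 1) - m ≤ σ k * (D k - m) := by nlinarith [hrec k, hσs k]
    have h2 : σ k * (D k - m) ≤ s * max (D k - m) 0 :=
      (mul_le_mul_of_nonneg_left (le_max_left _ _) (hσ₀ k)).trans
        (mul_le_mul_of_nonneg_right (hσs k) (le_max_right _ _))
    exact max_le (h1.trans h2) (mul_nonneg ((hσ₀ k).trans (hσs k)) (le_max_right _ _))
  refine limsup_le_of_le
    (isBoundedUnder_of_eventually_ge (Eventually.of_forall hD)).isCoboundedUnder_le ?_
  filter_upwards [hexcess.eventually (gt_mem_nhds (half_pos hε))] with k hk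
  linarith [le_max_left (D k - m) 0, hm]

theorem stmt_3_general {p : ℕ} (hp : 1 ≤ p)
    {Ω : Type} [MeasurableSpace Ω] (P : Measure Ω) [IsProbabilityMeasure P]
    (θhat θstar e : ℕ → Ω → EuclideanSpace ℝ (Fin p))
    (f : ℕ → Ω → EuclideanSpace ℝ (Fin p) → ℝ)
    (g : ℕ → Ω → EuclideanSpace ℝ (Fin p) → EuclideanSpace ℝ (Fin p))
    (a q C L M B u v : ℕ → ℝ)
    (hmeas1 : ∀ k, Measurable (θhat k))
    (hmeas2 : ∀ k, Measurable (θstar k))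
    (hCpos : ∀ k, 0 < C k) (hM : ∀ k, 0 ≤ M k) (hB : ∀ k, 0 ≤ B k)
    (hreg : ∀ k, ∀ᵐ ω ∂P,
      ContDiff ℝ 1 (f k ω) ∧
      (∀ x, HasGradientAt (f k ω) (g k ω x) x) ∧
      (∀ x y : EuclideanSpace ℝ (Fin p),
        C k * ‖x - y‖ ^ 2 ≤ (inner ℝ (x - y) (g k ω x - g k ω y) : ℝ)) ∧
      (∀ x y : EuclideanSpace ℝ (Fin p), ‖g k ω x - g k ω y‖ ≤ L k * ‖x - y‖) ∧
      g k ω (θstar k ω) = 0)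
    (hrec : ∀ k, ∀ᵐ ω ∂P,
      θhat (k + 1) ω = θhat k ω - a k • (g k ω (θhat k ω) + e k ω))
    (heL2 : ∀ k, MemLp (e k) 2 P)
    (heM : ∀ k, (∫ ω, ‖e k ω‖ ^ 2 ∂P) ≤ M k ^ 2)
    (hdL2 : ∀ k, MemLp (fun ω => θstar (k + 1) ω - θstar k ω) 2 P)
    (hdB : ∀ k, (∫ ω, ‖θstar (k + 1) ω - θstar k ω‖ ^ 2 ∂P) ≤ B k ^ 2)
    (ha : ∀ k, 0 < a k) (hq : ∀ k, 0 < q k)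
    (haL : ∀ k, 1 ≤ a k * L k)
    (haLq : ∀ k, (q k + 1) * (a k * L k - 1) ≤ 1)
    (hu : ∀ k, u k = L k / C k + a k * C k * ((q k + 1) * (a k * L k - 1) - 1))
    (hv : ∀ k, v k = a k * (a k * L k * (q k + 1) - 1) / (q k * C k))
    (hint : ∀ k, Integrable (fun ω => ‖θhat k ω - θstar k ω‖ ^ 2) P)
    (ubar : ℝ) (hubar1 : ubar < 1) (hubar : ∀ k, u k ≤ ubar)
    (xlo X : ℝ)
    (hratio : ∀ k,
      xlo ≤ (M k * Real.sqrt (v k) + B k) / (1 - Real.sqrt (u k)) ∧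
        (M k * Real.sqrt (v k) + B k) / (1 - Real.sqrt (u k)) ≤ X) :
    Filter.limsup (fun k => Real.sqrt (∫ ω, ‖θhat k ω - θstar k ω‖ ^ 2 ∂P))
        Filter.atTop ≤
      Filter.limsup
        (fun k => (M k * Real.sqrt (v k) + B k) / (1 - Real.sqrt (u k)))
        Filter.atTop := by
  have : Nonempty (Fin p) := ⟨⟨0, hp⟩⟩
  have hs : √ubar < 1 := (Real.sqrt_lt' one_pos).2 (by simpa using hubar1)
  have hstep : ∀ k, ∀ᵐ ω ∂P, ‖θhat (k + 1) ω - θstar (k + 1) ω‖ ≤ √(u k) *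
      ‖θhat k ω - θstar k ω‖ + √(v k) * ‖e k ω‖ + ‖θstar (k + 1) ω - θstar k ω‖ := fun k => by
    filter_upwards [hreg k, hrec k] with ω hregω hω
    obtain ⟨-, hg, hstrong, hlip, hzero⟩ := hregω
    rw [hu k, hv k]
    exact norm_sub_le_of_gradient_step hg hstrong hlip (ha k) (hq k) (hCpos k) (haL k) (haLq k)
      hzero hω
  have hrms : ∀ k, √(∫ ω, ‖θhat (k + 1) ω - θstar (k + 1) ω‖ ^ 2 ∂P) ≤
      √(u k) * √(∫ ω, ‖θhat k ω - θstar k ω‖ ^ 2 ∂P) +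
        (1 - √(u k)) * ((M k * √(v k) + B k) / (1 - √(u k))) := fun k => by
    have hθk : MemLp (fun ω => θhat k ω - θstar k ω) 2 P :=
      (memLp_two_iff_integrable_sq_norm ((hmeas1 k).sub (hmeas2 k)).aestronglyMeasurable).2
        (hint k)
    have hMk := (Real.sqrt_le_sqrt (heM k)).trans_eq (Real.sqrt_sq (hM k))
    have hBk := (Real.sqrt_le_sqrt (hdB k)).trans_eq (Real.sqrt_sq (hB k))
    rw [mul_div_cancel₀ _ (sub_pos.2 ((Real.sqrt_le_sqrt (hubar k)).trans_lt hs)).ne']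
    refine (sqrt_integral_sq_norm_le (Real.sqrt_nonneg _) (Real.sqrt_nonneg _)
      ((hmeas1 (k + 1)).sub (hmeas2 (k + 1))).aestronglyMeasurable hθk (heL2 k) (hdL2 k)
      (hstep k)).trans ?_
    linarith [mul_le_mul_of_nonneg_left hMk (Real.sqrt_nonneg (v k))]
  exact limsup_le_limsup_of_le_convex_comb (fun _ => Real.sqrt_nonneg _)
    (fun k => Real.sqrt_le_sqrt (hubar k)) hs
    (fun _ => Real.sqrt_nonneg _) ⟨X, by rintro _ ⟨k, rfl⟩; exact (hratio k).2⟩ hrms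

/-- Asymptotic RMS bound: under the bounded-drift time-varying stochastic
approximation setting, if additionally `u_k ≤ ū < 1` for all `k` and
`0 < x̲ ≤ (M_k√(v_k)+B_k)/(1−√(u_k)) ≤ X < ∞` for all `k`, then
`limsup_k √(E‖θ̂_k − θ*_k‖²) ≤ limsup_k (M_k√(v_k)+B_k)/(1−√(u_k))`. -/
theorem stmt_3 {p : ℕ} (hp : 1 ≤ p)
    {Ω : Type} [MeasurableSpace Ω] (P : Measure Ω) [IsProbabilityMeasure P]
    (θhat θstar e : ℕ → Ω → EuclideanSpace ℝ (Fin p))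
    (f : ℕ → Ω → EuclideanSpace ℝ (Fin p) → ℝ)
    (g : ℕ → Ω → EuclideanSpace ℝ (Fin p) → EuclideanSpace ℝ (Fin p))
    (a q C L M B u v : ℕ → ℝ)
    (hmeas1 : ∀ k, Measurable (θhat k))
    (hmeas2 : ∀ k, Measurable (θstar k))
    (hmeas3 : ∀ k, Measurable (e k))
    (hCpos : ∀ k, 0 < C k) (hM : ∀ k, 0 ≤ M k) (hB : ∀ k, 0 ≤ B k)
    (hreg : ∀ k, ∀ᵐ ω ∂P,
      ContDiff ℝ 1 (f k ω) ∧
      (∀ x, HasGradientAt (f k ω) (g k ω x) x) ∧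
      (∀ x y : EuclideanSpace ℝ (Fin p),
        C k * ‖x - y‖ ^ 2 ≤ (inner ℝ (x - y) (g k ω x - g k ω y) : ℝ)) ∧
      (∀ x y : EuclideanSpace ℝ (Fin p), ‖g k ω x - g k ω y‖ ≤ L k * ‖x - y‖) ∧
      g k ω (θstar k ω) = 0)
    (hrec : ∀ k, ∀ᵐ ω ∂P,
      θhat (k + 1) ω = θhat k ω - a k • (g k ω (θhat k ω) + e k ω))
    (heL2 : ∀ k, MemLp (e k) 2 P)
    (heM : ∀ k, (∫ ω, ‖e k ω‖ ^ 2 ∂P) ≤ M k ^ 2)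
    (hdL2 : ∀ k, MemLp (fun ω => θstar (k + 1) ω - θstar k ω) 2 P)
    (hdB : ∀ k, (∫ ω, ‖θstar (k + 1) ω - θstar k ω‖ ^ 2 ∂P) ≤ B k ^ 2)
    (ha : ∀ k, 0 < a k) (hq : ∀ k, 0 < q k)
    (haL : ∀ k, 1 ≤ a k * L k)
    (haLq : ∀ k, (q k + 1) * (a k * L k - 1) ≤ 1)
    (hu : ∀ k, u k = L k / C k + a k * C k * ((q k + 1) * (a k * L k - 1) - 1))
    (hv : ∀ k, v k = a k * (a k * L k * (q k + 1) - 1) / (q k * C k))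
    (hint : ∀ k, Integrable (fun ω => ‖θhat k ω - θstar k ω‖ ^ 2) P)
    (ubar : ℝ) (hubar1 : ubar < 1) (hubar : ∀ k, u k ≤ ubar)
    (xlo X : ℝ) (hxlo : 0 < xlo) (hxloX : xlo ≤ X)
    (hratio : ∀ k,
      xlo ≤ (M k * Real.sqrt (v k) + B k) / (1 - Real.sqrt (u k)) ∧
        (M k * Real.sqrt (v k) + B k) / (1 - Real.sqrt (u k)) ≤ X) :
    Filter.limsup (fun k => Real.sqrt (∫ ω, ‖θhat k ω - θstar k ω‖ ^ 2 ∂P))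
        Filter.atTop ≤
      Filter.limsup
        (fun k => (M k * Real.sqrt (v k) + B k) / (1 - Real.sqrt (u k)))
        Filter.atTop :=
  stmt_3_general hp P θhat θstar e f g a q C L M B u v hmeas1 hmeas2 hCpos hM hB hreg hrec heL2 heM
    hdL2 hdB ha hq haL haLq hu hv hint ubar hubar1 hubar xlo X hratio
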